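/- arXiv:1602.06597 — 4 statements merged into one kernel-verified Lean document; each statement's English description precedes it below -/
import Mathlib

section
/- Let M be a subset of ℬ(χ_1,…,χ_k) such that for every subset J ⊆ {1,…,k} the subgroup {m ∈ 𝒢(χ_1,…,χ_k) : supp(m) ⊆ J} of ℤ^k is generated (as an abelian group) by M_J := {m ∈ M : supp(m) ⊆ J}. Then {x^m : m ∈ M} is a separating set among the G-invariant polynomials on F^k. -/
open MvPolynomial

/-- A polynomial `h` on `F^ι` is invariant under the diagonal action of `G`
given by the characters `χ i : G → Fˣ`. -/
def IsInvariantPoly {F : Type*} [Field F] {G : Type*} [CommGroup G]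
    {ι : Type*} [Fintype ι] (χ : ι → G →* Fˣ) (h : MvPolynomial ι F) : Prop :=
  ∀ (g : G) (v : ι → F), eval (fun i => ((χ i g : Fˣ) : F) * v i) h = eval v h

/-- `S` is a separating set of `G`-invariant polynomials on `F^ι`. -/
def IsSeparatingSet {F : Type*} [Field F] {G : Type*} [CommGroup G]
    {ι : Type*} [Fintype ι] (χ : ι → G →* Fˣ) (S : Set (MvPolynomial ι F)) : Prop :=
  ∀ v w : ι → F, (∀ f ∈ S, eval v f = eval w f) →
    ∀ h : MvPolynomial ι F, IsInvariantPoly χ h → eval v h = eval w h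

/-!
An invariant polynomial over an infinite field is a combination of invariant monomials `x^m`,
`m ∈ ℬ(χ)`, so it suffices to show `v^m = w^m` whenever `v^a = w^a` for all `a ∈ M`. With
`J = supp m`, the hypothesis puts `m` in the lattice `⟨M_J⟩`. If `w` has no zero on `J`, every
generator `a ∈ M_J` has `v^a = w^a ≠ 0`, so every vector of `⟨M_J⟩`, in particular `m`, vanishes
wherever `v` does. Hence either both `v` and `w` vanish somewhere on `J`, and `v^m = w^m = 0`, or
neither does, and then `n ↦ v^n` and `n ↦ w^n` are homomorphisms `ℤ^J → Fˣ` that agree on the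
generators `M_J`, hence on `m`.
-/

namespace MvPolynomial

variable {σ R : Type*} [CommSemiring R]

theorem aeval_C_mul_X_monomial [Fintype σ] (c : σ → R) (d : σ →₀ ℕ) (a : R) :
    aeval (fun i => C (c i) * X i) (monomial d a) = monomial d ((∏ i, c i ^ d i) * a) := by
  rw [aeval_monomial, monomial_eq, Finsupp.prod_fintype _ _ (fun _ => pow_zero _),
    Finsupp.prod_fintype _ _ (fun _ => pow_zero _)]
  simp only [mul_pow, Finset.prod_mul_distrib, ← map_pow, ← map_prod, algebraMap_eq, C_mul]
  ring

theorem coeff_aeval_C_mul_X [Fintype σ] (c : σ → R) (p : MvPolynomial σ R) (d : σ →₀ ℕ) :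
    coeff d (aeval (fun i => C (c i) * X i) p) = (∏ i, c i ^ d i) * coeff d p := by
  classical
  induction p using MvPolynomial.induction_on' with
  | monomial e a =>
    rw [aeval_C_mul_X_monomial, coeff_monomial, coeff_monomial]
    split_ifs with h
    · rw [h]
    · rw [mul_zero]
  | add p q hp hq => rw [map_add, coeff_add, coeff_add, hp, hq, mul_add]

theorem eval_aeval_C_mul_X (c v : σ → R) (p : MvPolynomial σ R) :
    eval v (aeval (fun i => C (c i) * X i) p) = eval (fun i => c i * v i) p := by
  rw [← coe_aeval_eq_eval, ← coe_aeval_eq_eval]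
  change ((aeval v).comp (aeval _)) p = _
  rw [comp_aeval]
  simp

end MvPolynomial

theorem IsInvariantPoly.prod_pow_eq_one {F G ι : Type*} [Field F] [Infinite F] [CommGroup G]
    [Fintype ι] {χ : ι → G →* Fˣ} {h : MvPolynomial ι F} (hinv : IsInvariantPoly χ h)
    {d : ι →₀ ℕ} (hd : coeff d h ≠ 0) (g : G) :
    ∏ i, χ i g ^ d i = 1 := by
  have hscale : aeval (fun i => C ((χ i g : Fˣ) : F) * X i) h = h :=
    MvPolynomial.funext fun v => by rw [eval_aeval_C_mul_X]; exact hinv g v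
  have hcoeff : (∏ i, ((χ i g : Fˣ) : F) ^ d i) * coeff d h = 1 * coeff d h := by
    rw [← coeff_aeval_C_mul_X, hscale, one_mul]
  ext
  push_cast
  exact mul_right_cancel₀ hd hcoeff

section Lattice

/-- The lattice `⟨M_J⟩ ≤ ℤ^ι`. -/
def closureSupportedIn {ι : Type*} (M : Set (ι → ℕ)) (J : Finset ι) : AddSubgroup (ι → ℤ) :=
  AddSubgroup.closure ((fun (m : ι → ℕ) (i : ι) => (m i : ℤ)) '' {m ∈ M | ∀ i, m i ≠ 0 → i ∈ J})

variable {ι K : Type*} [Fintype ι] [CommGroupWithZero K] {M : Set (ι → ℕ)} {J : Finset ι} {v w : ι → K}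

theorem prod_pow_eq_prod_zpow {a : ι → ℕ} (ha : ∀ i, a i ≠ 0 → i ∈ J) :
    ∏ i, v i ^ a i = ∏ i ∈ J, v i ^ (a i : ℤ) := by
  simp only [zpow_natCast]
  exact (Finset.prod_subset (Finset.subset_univ J) fun i _ hi => by
    rw [not_imp_comm.1 (ha i) hi, pow_zero]).symm

theorem prod_pow_ne_zero {a : ι → ℕ} (ha : ∀ i, a i ≠ 0 → i ∈ J) (hw : ∀ i ∈ J, w i ≠ 0) :
    ∏ i, w i ^ a i ≠ 0 :=
  Finset.prod_ne_zero_iff.2 fun i _ => by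
    by_cases hai : a i = 0
    · simp [hai]
    · exact pow_ne_zero _ (hw i (ha i hai))

theorem apply_eq_zero_of_mem_closureSupportedIn
    (hvw : ∀ a ∈ M, ∏ i, v i ^ a i = ∏ i, w i ^ a i) (hw : ∀ i ∈ J, w i ≠ 0)
    {n : ι → ℤ} (hn : n ∈ closureSupportedIn M J) {j : ι} (hv : v j = 0) : n j = 0 := by
  induction hn using AddSubgroup.closure_induction with
  | mem _ hx =>
    obtain ⟨a, ⟨haM, haJ⟩, rfl⟩ := hx
    refine Nat.cast_eq_zero.2 (by_contra fun haj => prod_pow_ne_zero haJ hw ?_)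
    rw [← hvw a haM]
    exact Finset.prod_eq_zero (Finset.mem_univ j) (by rw [hv, zero_pow haj])
  | zero => rfl
  | add _ _ _ _ ha hb => simp [ha, hb]
  | neg _ _ ha => simp [ha]

theorem prod_zpow_eq_of_mem_closureSupportedIn
    (hvw : ∀ a ∈ M, ∏ i, v i ^ a i = ∏ i, w i ^ a i)
    (hv : ∀ i ∈ J, v i ≠ 0) (hw : ∀ i ∈ J, w i ≠ 0)
    {n : ι → ℤ} (hn : n ∈ closureSupportedIn M J) :
    ∏ i ∈ J, v i ^ n i = ∏ i ∈ J, w i ^ n i := by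
  induction hn using AddSubgroup.closure_induction with
  | mem _ hx =>
    obtain ⟨a, ⟨haM, haJ⟩, rfl⟩ := hx
    rw [← prod_pow_eq_prod_zpow haJ, ← prod_pow_eq_prod_zpow haJ, hvw a haM]
  | zero => simp
  | add a b _ _ ha hb =>
    simp only [Pi.add_apply]
    rw [Finset.prod_congr rfl fun i hi => zpow_add₀ (hv i hi) (a i) (b i),
      Finset.prod_congr rfl fun i hi => zpow_add₀ (hw i hi) (a i) (b i),
      Finset.prod_mul_distrib, Finset.prod_mul_distrib, ha, hb]
  | neg a _ ha => simp only [Pi.neg_apply, zpow_neg, Finset.prod_inv_distrib, ha]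

theorem prod_pow_eq_of_mem_closureSupportedIn
    (hvw : ∀ a ∈ M, ∏ i, v i ^ a i = ∏ i, w i ^ a i) {m : ι → ℕ}
    (hm : (fun i => (m i : ℤ)) ∈ closureSupportedIn M (Finset.univ.filter (m · ≠ 0))) :
    ∏ i, v i ^ m i = ∏ i, w i ^ m i := by
  set J := Finset.univ.filter (m · ≠ 0)
  have hsupp : ∀ i, m i ≠ 0 → i ∈ J := fun i hi => Finset.mem_filter.2 ⟨Finset.mem_univ i, hi⟩
  have hnonzero : ∀ {x y : ι → K}, (∀ a ∈ M, ∏ i, x i ^ a i = ∏ i, y i ^ a i) →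
      (∀ i ∈ J, y i ≠ 0) → ∀ i ∈ J, x i ≠ 0 := fun hxy hy i hi hxi =>
    (Finset.mem_filter.1 hi).2 <| Nat.cast_eq_zero.1 <|
      apply_eq_zero_of_mem_closureSupportedIn hxy hy hm hxi
  have hnonzero_iff : (∀ i ∈ J, v i ≠ 0) ↔ ∀ i ∈ J, w i ≠ 0 :=
    ⟨hnonzero fun a ha => (hvw a ha).symm, hnonzero hvw⟩
  by_cases hv : ∀ i ∈ J, v i ≠ 0
  · rw [prod_pow_eq_prod_zpow hsupp, prod_pow_eq_prod_zpow hsupp]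
    exact prod_zpow_eq_of_mem_closureSupportedIn hvw hv (hnonzero_iff.1 hv) hm
  · have hw : ¬∀ i ∈ J, w i ≠ 0 := hnonzero_iff.not.1 hv
    push Not at hv hw
    obtain ⟨i, hi, hvi⟩ := hv
    obtain ⟨j, hj, hwj⟩ := hw
    rw [Finset.prod_eq_zero (Finset.mem_univ i) (by rw [hvi, zero_pow (Finset.mem_filter.1 hi).2]),
      Finset.prod_eq_zero (Finset.mem_univ j) (by rw [hwj, zero_pow (Finset.mem_filter.1 hj).2])]

end Lattice

theorem separating_of_generates_general
    {F : Type*} [Field F] [IsAlgClosed F] {G : Type*} [CommGroup G]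
    {k : ℕ} (χ : Fin k → G →* Fˣ)
    (M : Set (Fin k → ℕ))
    (hgen : ∀ J : Finset (Fin k),
      (↑(AddSubgroup.closure ((fun (m : Fin k → ℕ) (i : Fin k) => ((m i : ℤ))) ''
          {m ∈ M | ∀ i, m i ≠ 0 → i ∈ J})) : Set (Fin k → ℤ))
        = {m : Fin k → ℤ | (∀ g : G, ∏ i, (χ i g) ^ (m i) = 1) ∧ ∀ i, m i ≠ 0 → i ∈ J}) :
    IsSeparatingSet χ ((fun m : Fin k → ℕ => ∏ i, (X i : MvPolynomial (Fin k) F) ^ m i) '' M) := by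
  intro v w hS h hinv
  have hvw : ∀ a ∈ M, ∏ i, v i ^ a i = ∏ i, w i ^ a i := fun a ha => by
    simpa using hS _ ⟨a, ha, rfl⟩
  rw [eval_eq', eval_eq']
  refine Finset.sum_congr rfl fun d hd => congrArg _ (prod_pow_eq_of_mem_closureSupportedIn hvw ?_)
  rw [← SetLike.mem_coe, closureSupportedIn, hgen]
  refine ⟨fun g => by simpa using hinv.prod_pow_eq_one (mem_support_iff.1 hd) g, fun i hi => ?_⟩
  simpa using hi

/-- If for every subset `J ⊆ {1,…,k}` the subgroup `{m ∈ 𝓖(χ) : supp m ⊆ J}` of `ℤ^k`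
is generated by `M_J := {m ∈ M : supp m ⊆ J}`, then `{x^m : m ∈ M}` is a separating set
among the `G`-invariant polynomials on `F^k`. -/
theorem separating_of_generates
    {F : Type*} [Field F] [IsAlgClosed F] {G : Type*} [CommGroup G] [Fintype G]
    (hchar : ¬ (ringChar F ∣ Fintype.card G))
    {k : ℕ} (χ : Fin k → G →* Fˣ)
    (M : Set (Fin k → ℕ))
    (hM : ∀ m ∈ M, ∀ g : G, ∏ i, (χ i g) ^ (m i) = 1)
    (hgen : ∀ J : Finset (Fin k),
      (↑(AddSubgroup.closure ((fun (m : Fin k → ℕ) (i : Fin k) => ((m i : ℤ))) ''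
          {m ∈ M | ∀ i, m i ≠ 0 → i ∈ J})) : Set (Fin k → ℤ))
        = {m : Fin k → ℤ | (∀ g : G, ∏ i, (χ i g) ^ (m i) = 1) ∧ ∀ i, m i ≠ 0 → i ∈ J}) :
    IsSeparatingSet χ ((fun m : Fin k → ℕ => ∏ i, (X i : MvPolynomial (Fin k) F) ^ m i) '' M) :=
  separating_of_generates_general χ M hgen
end

section
/- Let G be a finite abelian group, N ≥ 1 an integer, and d a positive integer. Suppose that for every positive integer s ≤ N and every sequence a_1,…,a_s of pairwise distinct elements of G, the abelian group 𝒢(a_1,…,a_s) is generated by {m ∈ ℬ(a_1,…,a_s) : |m| ≤ d}. Then for every positive integer s ≤ N and every sequence a_1,…,a_s of (not necessarily distinct) elements of G, the abelian group 𝒢(a_1,…,a_s) is generated by {m ∈ ℬ(a_1,…,a_s) : |m| ≤ d}. -/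
/-!
For a single element `g`, the hypothesis forces `addOrderOf g ≤ d`: otherwise the only vector of
`ℬ(g)` of length at most `d` is `0`, whereas `addOrderOf g ∈ 𝒢(g)`.

If `a i = a j` with `i ≠ j` and `n = addOrderOf (a j)`, then `e_j - e_i = n e_j - (e_i + (n - 1) e_j)`
is a difference of two short vectors of `ℬ(a)`. Modulo multiples of `e_j - e_i`, every `m ∈ 𝒢(a)`
is obtained from the vector of `𝒢(a ∘ j.succAbove)` that moves the coefficient of `a j` onto `a i`,
extended by a zero coordinate at `j`. Hence repetitions can be removed one at a time, by induction
on the length of the sequence.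
-/

/-- For a sequence `a : Fin k → G` in an additive abelian group, this says that the
abelian group `𝓖(a_1,…,a_k) = {m ∈ ℤ^k : Σ m_i • a_i = 0}` is generated by the set
`{m ∈ 𝓑(a_1,…,a_k) : |m| ≤ d}` of zero-sum vectors `m ∈ ℕ^k` of length at most `d`. -/
def ZeroSumGeneratedBy {G : Type*} [AddCommGroup G] {k : ℕ} (a : Fin k → G) (d : ℕ) : Prop :=
  (↑(AddSubgroup.closure ((fun (m : Fin k → ℕ) (i : Fin k) => ((m i : ℤ))) ''
      {m : Fin k → ℕ | (∑ i, m i • a i = 0) ∧ ∑ i, m i ≤ d})) : Set (Fin k → ℤ))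
    = {m : Fin k → ℤ | ∑ i, m i • a i = 0}

section

variable {G : Type*} [AddCommGroup G] {k : ℕ}

def shortZeroSums (a : Fin k → G) (d : ℕ) : Set (Fin k → ℤ) :=
  (fun (m : Fin k → ℕ) (i : Fin k) => ((m i : ℤ))) ''
    {m : Fin k → ℕ | (∑ i, m i • a i = 0) ∧ ∑ i, m i ≤ d}

theorem mem_shortZeroSums {a : Fin k → G} {d : ℕ} {m : Fin k → ℤ} :
    m ∈ shortZeroSums a d ↔ 0 ≤ m ∧ ∑ i, m i • a i = 0 ∧ ∑ i, m i ≤ d := by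
  constructor
  · rintro ⟨u, ⟨hsum, hlen⟩, rfl⟩
    refine ⟨fun i => Int.natCast_nonneg _, by simpa [natCast_zsmul] using hsum, ?_⟩
    dsimp only
    exact_mod_cast hlen
  · rintro ⟨hm, hsum, hlen⟩
    lift m to Fin k → ℕ using hm
    refine ⟨m, ⟨by simpa [natCast_zsmul] using hsum, ?_⟩, rfl⟩
    dsimp only at hlen
    exact_mod_cast hlen

theorem closure_shortZeroSums_le (a : Fin k → G) (d : ℕ) :
    AddSubgroup.closure (shortZeroSums a d) ≤
      (Fintype.linearCombination ℤ a).toAddMonoidHom.ker := by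
  rw [AddSubgroup.closure_le]
  intro m hm
  simpa [Fintype.linearCombination_apply] using (mem_shortZeroSums.mp hm).2.1

theorem zeroSumGeneratedBy_iff {a : Fin k → G} {d : ℕ} :
    ZeroSumGeneratedBy a d ↔
      ∀ m : Fin k → ℤ, ∑ i, m i • a i = 0 → m ∈ AddSubgroup.closure (shortZeroSums a d) := by
  refine ⟨fun h m hm => ?_, fun h => ?_⟩
  · change m ∈ (AddSubgroup.closure (shortZeroSums a d) : Set (Fin k → ℤ))
    rw [shortZeroSums, h]
    exact hm
  · refine Set.Subset.antisymm (fun m hm => ?_) h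
    simpa [Fintype.linearCombination_apply] using closure_shortZeroSums_le a d hm

theorem zeroSumGeneratedBy_of_isEmpty [IsEmpty (Fin k)] (a : Fin k → G) (d : ℕ) :
    ZeroSumGeneratedBy a d :=
  zeroSumGeneratedBy_iff.mpr fun m _ => Subsingleton.elim 0 m ▸ zero_mem _

theorem addOrderOf_le_of_zeroSumGeneratedBy_const {g : G} {d : ℕ}
    (h : ZeroSumGeneratedBy (fun _ : Fin 1 => g) d) : addOrderOf g ≤ d := by
  by_contra! hlt
  have hbot : AddSubgroup.closure (shortZeroSums (fun _ : Fin 1 => g) d) = ⊥ := by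
    rw [AddSubgroup.closure_eq_bot_iff]
    rintro _ ⟨u, ⟨hsum, hlen⟩, rfl⟩
    simp only [Fin.sum_univ_one] at hsum hlen
    have hu : u 0 = 0 :=
      Nat.eq_zero_of_dvd_of_lt (addOrderOf_dvd_of_nsmul_eq_zero hsum) (by omega)
    ext i
    simp [Fin.fin_one_eq_zero i, hu]
  have hmem := zeroSumGeneratedBy_iff.mp h (fun _ => (addOrderOf g : ℤ))
    (by simp [natCast_zsmul, addOrderOf_nsmul_eq_zero])
  rw [hbot, AddSubgroup.mem_bot] at hmem
  have : (addOrderOf g : ℤ) = 0 := congrFun hmem 0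
  omega

theorem single_sub_single_mem_closure_shortZeroSums {a : Fin k → G} {d : ℕ} {i j : Fin k}
    (hij : a i = a j) (hpos : 0 < addOrderOf (a j)) (hord : addOrderOf (a j) ≤ d) :
    Pi.single j 1 - Pi.single i 1 ∈ AddSubgroup.closure (shortZeroSums a d) := by
  set n := addOrderOf (a j)
  have hn : n • a j = 0 := addOrderOf_nsmul_eq_zero _
  have hw : Pi.single j (n : ℤ) ∈ shortZeroSums a d := by
    refine mem_shortZeroSums.mpr ⟨Pi.single_nonneg.mpr (Int.natCast_nonneg _), ?_, ?_⟩
    · simpa [← Fintype.linearCombination_apply, Fintype.linearCombination_apply_single]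
    · simpa [Finset.sum_pi_single']
  have hv : (Pi.single i 1 + Pi.single j ((n : ℤ) - 1) : Fin k → ℤ) ∈ shortZeroSums a d := by
    refine mem_shortZeroSums.mpr ⟨add_nonneg (by simp) (by simpa using Nat.one_le_of_lt hpos), ?_, ?_⟩
    · rw [← Fintype.linearCombination_apply, map_add, Fintype.linearCombination_apply_single,
        Fintype.linearCombination_apply_single, hij, ← add_smul]
      simpa
    · simpa [Finset.sum_add_distrib, Finset.sum_pi_single'] using hord
  have hdiff : Pi.single j (n : ℤ) - ((Pi.single i 1 + Pi.single j ((n : ℤ) - 1) : Fin k → ℤ)) =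
      Pi.single j 1 - Pi.single i 1 := by
    rw [sub_add_eq_sub_sub_swap, ← Pi.single_sub, sub_sub_cancel]
  rw [← hdiff]
  exact sub_mem (AddSubgroup.subset_closure hw) (AddSubgroup.subset_closure hv)

theorem insertNth_zero_mem_closure_shortZeroSums {t d : ℕ} {a : Fin (t + 1) → G} {j : Fin (t + 1)}
    {u : Fin t → ℤ} (hu : u ∈ AddSubgroup.closure (shortZeroSums (a ∘ j.succAbove) d)) :
    j.insertNth 0 u ∈ AddSubgroup.closure (shortZeroSums a d) := by
  induction hu using AddSubgroup.closure_induction with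
  | mem u hu =>
    obtain ⟨hnonneg, hsum, hlen⟩ := mem_shortZeroSums.mp hu
    refine AddSubgroup.subset_closure (mem_shortZeroSums.mpr ⟨?_, ?_, ?_⟩)
    · exact Fin.le_insertNth_iff.mpr ⟨le_rfl, hnonneg⟩
    · simpa [Fin.sum_univ_succAbove _ j] using hsum
    · simpa [Fin.sum_univ_succAbove _ j] using hlen
  | zero => simp
  | add u v _ _ hu hv => simpa [← Fin.insertNth_add] using add_mem hu hv
  | neg u _ hu =>
    convert neg_mem hu using 1
    simpa using Fin.insertNth_sub (α := fun _ => ℤ) j 0 0 0 u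

theorem zeroSumGeneratedBy_of_apply_eq {t d : ℕ} {a : Fin (t + 1) → G} {i j : Fin (t + 1)}
    (hne : i ≠ j) (hij : a i = a j) (hpos : 0 < addOrderOf (a j)) (hord : addOrderOf (a j) ≤ d)
    (h : ZeroSumGeneratedBy (a ∘ j.succAbove) d) : ZeroSumGeneratedBy a d := by
  obtain ⟨i, rfl⟩ := Fin.exists_succAbove_eq hne
  rw [zeroSumGeneratedBy_iff] at h ⊢
  intro m hm
  set m' : Fin t → ℤ := j.removeNth m + Pi.single i (m j)
  have hm' : ∑ l, m' l • (a ∘ j.succAbove) l = 0 := by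
    rw [← Fintype.linearCombination_apply, map_add, Fintype.linearCombination_apply_single,
      Fintype.linearCombination_apply, ← hm, Fin.sum_univ_succAbove _ j]
    simp [Fin.removeNth_apply, hij, add_comm]
  have hdecomp : m = j.insertNth 0 m' + m j • (Pi.single j 1 - Pi.single (j.succAbove i) 1) := by
    ext k
    cases k using Fin.succAboveCases j with
    | x => simp [hne.symm]
    | p l => simp [m', Pi.single_apply, Fin.removeNth_apply]
  rw [hdecomp]
  exact add_mem (insertNth_zero_mem_closure_shortZeroSums (h m' hm'))
    (zsmul_mem (single_sub_single_mem_closure_shortZeroSums hij hpos hord) _)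

end

theorem zeroSumGenerated_of_distinct_general
    {G : Type*} [AddCommGroup G] [Fintype G] (N : ℕ) (hN : 1 ≤ N) (d : ℕ)
    (hdist : ∀ s : ℕ, 0 < s → s ≤ N → ∀ a : Fin s → G, Function.Injective a →
      ZeroSumGeneratedBy a d) :
    ∀ s : ℕ, 0 < s → s ≤ N → ∀ a : Fin s → G, ZeroSumGeneratedBy a d := by
  have hord (g : G) : addOrderOf g ≤ d := addOrderOf_le_of_zeroSumGeneratedBy_const
    (hdist 1 one_pos hN _ (Function.injective_of_subsingleton _))
  suffices ∀ s ≤ N, ∀ a : Fin s → G, ZeroSumGeneratedBy a d from fun s _ hs => this s hs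
  intro s
  induction s with
  | zero => exact fun _ a => zeroSumGeneratedBy_of_isEmpty a d
  | succ t ih =>
    intro hs a
    by_cases ha : Function.Injective a
    · exact hdist _ t.succ_pos hs a ha
    obtain ⟨i, j, hij, hne⟩ := Function.not_injective_iff.mp ha
    exact zeroSumGeneratedBy_of_apply_eq hne hij (addOrderOf_pos _) (hord _) (ih (by omega) _)

/-- If for every `1 ≤ s ≤ N` and every sequence of `s` pairwise distinct elements of the
finite abelian group `G` the group `𝓖(a_1,…,a_s)` is generated by
`{m ∈ 𝓑(a_1,…,a_s) : |m| ≤ d}`, then the same holds for arbitrary (not necessarily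
distinct) sequences of length at most `N`. -/
theorem zeroSumGenerated_of_distinct
    {G : Type*} [AddCommGroup G] [Fintype G] (N : ℕ) (hN : 1 ≤ N) (d : ℕ) (hd : 0 < d)
    (hdist : ∀ s : ℕ, 0 < s → s ≤ N → ∀ a : Fin s → G, Function.Injective a →
      ZeroSumGeneratedBy a d) :
    ∀ s : ℕ, 0 < s → s ≤ N → ∀ a : Fin s → G, ZeroSumGeneratedBy a d :=
  zeroSumGenerated_of_distinct_general N hN d hdist
end

section
/- Let r ≥ 1 and let n_1,…,n_r and m_1,…,m_r be positive integers such that m_i divides n_i for i = 1,…,r and n_{i+1} divides m_i for i = 1,…,r−1. Then Σ_{i=1}^r (n_i − 1) ≥ Σ_{i=1}^r (m_i − 1) + Π_{i=1}^r (n_i/m_i) − 1. Moreover, equality holds if and only if there exists j ∈ {0,1,…,r} such that m_i = n_i for 1 ≤ i ≤ j and m_i = n_{i+1} for j < i ≤ r, where by convention n_{r+1} = 1. -/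
/-!
Write `d_i = n_i / m_i`. Telescoping the divisibility chain `n_{r+1} ∣ m_r ∣ n_r ∣ ⋯ ∣ m_1 ∣ n_1`
gives `n_1 = ∏ d_i · ∏ (m_i / n_{i+1}) · n_{r+1}`, hence `d_1 ⋯ d_r ≤ n_1` when `n_{r+1} = 1`, with
equality iff `m_i = n_{i+1}` for all `i`. Applied to the tail this gives `P := d_2 ⋯ d_r ≤ n_2 ≤ m_1`.
Peeling off the first index, the inequality reduces by induction to `m_1 + P d_1 ≤ m_1 d_1 + P`,
i.e. `(d_1 - 1)(m_1 - P) ≥ 0`, and its equality case `m_1 = n_1` or `m_1 = P` is the first step of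
the condition on `j`.
-/

open Finset

section DivisibilityChain

variable {N M : ℕ → ℕ} {r : ℕ}

theorem eq_prod_mul_of_dvd_chain (hMN : ∀ i < r, M i ∣ N i) (hNM : ∀ i < r, N (i + 1) ∣ M i) :
    N 0 = (∏ i ∈ range r, N i / M i * (M i / N (i + 1))) * N r := by
  induction r with
  | zero => simp
  | succ r ih =>
    rw [ih (fun i hi => hMN i (by omega)) (fun i hi => hNM i (by omega)), prod_range_succ,
      mul_assoc, mul_assoc, Nat.div_mul_cancel (hNM r (by omega)),
      Nat.div_mul_cancel (hMN r (by omega))]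

theorem prod_div_pos (hN : ∀ i < r, 0 < N i) (hMN : ∀ i < r, M i ∣ N i) :
    0 < ∏ i ∈ range r, N i / M i :=
  prod_pos fun i hi => Nat.div_pos (Nat.le_of_dvd (hN i (mem_range.1 hi)) (hMN i (mem_range.1 hi)))
    (Nat.pos_of_dvd_of_pos (hMN i (mem_range.1 hi)) (hN i (mem_range.1 hi)))

theorem prod_div_mul_le_of_dvd_chain (hN : ∀ i ≤ r, 0 < N i) (hMN : ∀ i < r, M i ∣ N i)
    (hNM : ∀ i < r, N (i + 1) ∣ M i) :
    (∏ i ∈ range r, N i / M i) * N r ≤ N 0 ∧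
      ((∏ i ∈ range r, N i / M i) * N r = N 0 ↔ ∀ i < r, M i = N (i + 1)) := by
  have hM : ∀ i < r, 0 < M i := fun i hi => Nat.pos_of_dvd_of_pos (hMN i hi) (hN i hi.le)
  have hslack : ∀ i ∈ range r, 1 ≤ M i / N (i + 1) := fun i hi =>
    Nat.div_pos (Nat.le_of_dvd (hM i (mem_range.1 hi)) (hNM i (mem_range.1 hi)))
      (hN _ (mem_range.1 hi))
  have hpos : 0 < (∏ i ∈ range r, N i / M i) * N r :=
    Nat.mul_pos (prod_div_pos (fun i hi => hN i hi.le) hMN) (hN r le_rfl)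
  rw [eq_prod_mul_of_dvd_chain hMN hNM, prod_mul_distrib, mul_right_comm]
  refine ⟨Nat.le_mul_of_pos_right _ (prod_pos hslack), ?_⟩
  rw [eq_comm, Nat.mul_eq_left hpos.ne', prod_eq_one_iff_of_one_le' hslack]
  simp only [mem_range]
  refine forall₂_congr fun i hi => ?_
  rw [Nat.div_eq_iff_eq_mul_left (hN _ hi) (hNM i hi), one_mul]

def IsUpperThenLower (N M : ℕ → ℕ) (r : ℕ) : Prop :=
  ∃ j ≤ r, ∀ i < r, (i < j → M i = N i) ∧ (j ≤ i → M i = N (i + 1))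

theorem isUpperThenLower_succ_iff :
    IsUpperThenLower N M (r + 1) ↔
      (M 0 = N 0 ∨ ∀ i < r + 1, M i = N (i + 1)) ∧
        IsUpperThenLower (fun i => N (i + 1)) (fun i => M (i + 1)) r := by
  constructor
  · rintro ⟨_ | j, hj, h⟩
    · exact ⟨Or.inr fun i hi => (h i hi).2 (Nat.zero_le i),
        0, Nat.zero_le r, fun i hi => ⟨by omega, fun _ => (h (i + 1) (by omega)).2 (by omega)⟩⟩
    · exact ⟨Or.inl ((h 0 (by omega)).1 (by omega)),
        j, by omega, fun i hi => ⟨fun hij => (h (i + 1) (by omega)).1 (by omega),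
          fun hij => (h (i + 1) (by omega)).2 (by omega)⟩⟩
  · rintro ⟨h0 | hall, j, hj, h⟩
    · refine ⟨j + 1, by omega, fun i hi => ?_⟩
      rcases i with _ | i
      · exact ⟨fun _ => h0, by omega⟩
      · exact ⟨fun hij => (h i (by omega)).1 (by omega), fun hij => (h i (by omega)).2 (by omega)⟩
    · exact ⟨0, Nat.zero_le _, fun i hi => ⟨by omega, fun _ => hall i hi⟩⟩

theorem add_mul_le_mul_add {m p d : ℕ} (hpm : p ≤ m) (hd : 1 ≤ d) :
    m + p * d ≤ m * d + p ∧ (m + p * d = m * d + p ↔ d = 1 ∨ m = p) := by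
  refine ⟨by simpa [add_comm, mul_comm] using mul_add_mul_le_mul_add_mul hpm hd, ?_⟩
  constructor
  · intro h
    have hz : ((m : ℤ) + p * d) = m * d + p := by exact_mod_cast h
    have : ((d : ℤ) - 1) * ((m : ℤ) - p) = 0 := by linear_combination -hz
    rcases mul_eq_zero.1 this with h' | h' <;> [left; right] <;> omega
  · rintro (rfl | rfl) <;> ring

theorem sum_sub_one_add_prod_div_sub_one_le (hN : ∀ i < r, 0 < N i) (hMN : ∀ i < r, M i ∣ N i)
    (hNM : ∀ i < r, N (i + 1) ∣ M i) (hNr : N r = 1) :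
    ∑ i ∈ range r, (M i - 1) + ∏ i ∈ range r, N i / M i - 1 ≤ ∑ i ∈ range r, (N i - 1) ∧
      (∑ i ∈ range r, (N i - 1) = ∑ i ∈ range r, (M i - 1) + ∏ i ∈ range r, N i / M i - 1 ↔
        IsUpperThenLower N M r) := by
  induction r generalizing N M with
  | zero => simp [IsUpperThenLower]
  | succ r ih =>
    obtain ⟨hle, heq⟩ := ih (N := fun i => N (i + 1)) (M := fun i => M (i + 1))
      (fun i hi => hN _ (by omega)) (fun i hi => hMN _ (by omega))
      (fun i hi => hNM _ (by omega)) hNr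
    obtain ⟨hchain, hchain_eq⟩ := prod_div_mul_le_of_dvd_chain (N := fun i => N (i + 1))
      (M := fun i => M (i + 1)) (r := r)
      (fun i hi => hi.lt_or_eq.elim (fun hi => hN _ (by omega)) fun hi => by simp [hi, hNr])
      (fun i hi => hMN _ (by omega)) (fun i hi => hNM _ (by omega))
    simp only [hNr, mul_one, zero_add] at hchain hchain_eq
    rw [sum_range_succ', sum_range_succ', prod_range_succ', isUpperThenLower_succ_iff, ← heq]
    have hM0 : 0 < M 0 := Nat.pos_of_dvd_of_pos (hMN 0 (by omega)) (hN 0 (by omega))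
    have hN0 : N 0 = M 0 * (N 0 / M 0) := (Nat.mul_div_cancel' (hMN 0 (by omega))).symm
    have hD : 1 ≤ N 0 / M 0 := Nat.div_pos (Nat.le_of_dvd (hN 0 (by omega)) (hMN 0 (by omega))) hM0
    have hP : 1 ≤ ∏ i ∈ range r, N (i + 1) / M (i + 1) :=
      prod_div_pos (fun i hi => hN _ (by omega)) (fun i hi => hMN _ (by omega))
    generalize N 0 / M 0 = D at hN0 hD ⊢
    generalize ∏ i ∈ range r, N (i + 1) / M (i + 1) = P at *
    have hN1M0 : N 1 ≤ M 0 := Nat.le_of_dvd hM0 (hNM 0 (by omega))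
    obtain ⟨hrearr, hrearr_eq⟩ := add_mul_le_mul_add (hchain.trans hN1M0) hD
    have hD_eq_one : D = 1 ↔ M 0 = N 0 := by rw [hN0, eq_comm (a := M 0), Nat.mul_eq_left hM0.ne']
    have hM0_eq : M 0 = P ↔ ∀ i < r + 1, M i = N (i + 1) := by
      rw [Nat.forall_lt_succ_left, zero_add, ← hchain_eq]; omega
    rw [← hD_eq_one, ← hM0_eq, ← hrearr_eq, ← hN0]
    rw [← hN0] at hrearr
    have hPD : 1 ≤ P * D := one_le_mul hP hD
    generalize P * D = Q at *
    have := hN 0 (by omega)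
    constructor <;> omega

end DivisibilityChain

/-- Realizes the convention `n_{r+1} = 1`. -/
def Fin.extendOne {r : ℕ} (n : Fin r → ℕ) (i : ℕ) : ℕ :=
  if h : i < r then n ⟨i, h⟩ else 1

theorem Fin.extendOne_val {r : ℕ} (n : Fin r → ℕ) (i : Fin r) : Fin.extendOne n i = n i := by
  simp [Fin.extendOne]

theorem dstar_inequality_general (r : ℕ) (n m : Fin r → ℕ)
    (hn : ∀ i, 0 < n i)
    (hdvd₁ : ∀ i, m i ∣ n i)
    (hdvd₂ : ∀ (i : Fin r) (h : (i : ℕ) + 1 < r), n ⟨(i : ℕ) + 1, h⟩ ∣ m i) :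
    ((∑ i, (m i - 1)) + (∏ i, n i / m i) - 1 ≤ ∑ i, (n i - 1)) ∧
    ((∑ i, (n i - 1)) = (∑ i, (m i - 1)) + (∏ i, n i / m i) - 1 ↔
      ∃ j ≤ r, (∀ i : Fin r, (i : ℕ) < j → m i = n i) ∧
        (∀ i : Fin r, j ≤ (i : ℕ) →
          m i = if h : (i : ℕ) + 1 < r then n ⟨(i : ℕ) + 1, h⟩ else 1)) := by
  have key := sum_sub_one_add_prod_div_sub_one_le (r := r) (N := Fin.extendOne n)
    (M := Fin.extendOne m)
    (fun i hi => by simpa [Fin.extendOne, hi] using hn ⟨i, hi⟩)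
    (fun i hi => by simpa [Fin.extendOne, hi] using hdvd₁ ⟨i, hi⟩)
    (fun i hi => by
      by_cases h : i + 1 < r
      · simpa [Fin.extendOne, hi, h] using hdvd₂ ⟨i, hi⟩ h
      · simp [Fin.extendOne, h])
    (by simp [Fin.extendOne])
  simp only [← Fin.sum_univ_eq_sum_range, ← Fin.prod_univ_eq_prod_range, Fin.extendOne_val] at key
  refine ⟨key.1, key.2.trans ?_⟩
  simp only [IsUpperThenLower, Fin.forall_iff, ← forall_and]
  refine exists_congr fun j => and_congr_right fun _ => forall₂_congr fun i hi => ?_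
  simp only [Fin.extendOne, dif_pos hi]

/-- Let `n_1,…,n_r` and `m_1,…,m_r` be positive integers with `m_i ∣ n_i` and
`n_{i+1} ∣ m_i`.  Then `Σ (n_i - 1) ≥ Σ (m_i - 1) + Π (n_i / m_i) - 1`, with equality
if and only if there is `j ∈ {0,…,r}` with `m_i = n_i` for `i ≤ j` and `m_i = n_{i+1}`
for `i > j` (with the convention `n_{r+1} = 1`).  Indices here are 0-based:
`n ⟨0⟩` is `n_1`. -/
theorem dstar_inequality (r : ℕ) (hr : 1 ≤ r) (n m : Fin r → ℕ)
    (hn : ∀ i, 0 < n i) (hm : ∀ i, 0 < m i)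
    (hdvd₁ : ∀ i, m i ∣ n i)
    (hdvd₂ : ∀ (i : Fin r) (h : (i : ℕ) + 1 < r), n ⟨(i : ℕ) + 1, h⟩ ∣ m i) :
    ((∑ i, (m i - 1)) + (∏ i, n i / m i) - 1 ≤ ∑ i, (n i - 1)) ∧
    ((∑ i, (n i - 1)) = (∑ i, (m i - 1)) + (∏ i, n i / m i) - 1 ↔
      ∃ j ≤ r, (∀ i : Fin r, (i : ℕ) < j → m i = n i) ∧
        (∀ i : Fin r, j ≤ (i : ℕ) →
          m i = if h : (i : ℕ) + 1 < r then n ⟨(i : ℕ) + 1, h⟩ else 1)) :=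
  dstar_inequality_general r n m hn hdvd₁ hdvd₂
end

section
/- Let G be a finite abelian group of rank r with invariant factors n_1,…,n_r, and let H be a proper subgroup of G such that the factor group G/H is cyclic. Then d*(G) ≥ d*(H) + [G:H] − 1. Moreover, equality holds only if the rank of H equals r − 1 and H is isomorphic to the direct sum ⊕_{i ∈ {1,…,r}\{j}} C_{n_i} for some j ∈ {1,…,r}. -/
/-!
For a prime `p`, write `c_A(p^t)` for the number of invariant factors of `A` divisible by `p^t`,
so that `|A[p^(t+1)]| = |A[p^t]| * p ^ c_A(p^(t+1))`. Since `|G[k]| = |H[k]| * |π(G[k])|` for the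
projection `π : G → G ⧸ H`, and multiplication by `p` maps `π(G[p^(t+1)])` into `π(G[p^t])` with
kernel inside the at most `p` elements of the cyclic group `(G ⧸ H)[p]`, we get
`c_H ≤ c_G ≤ c_H + 1` at every prime power. For divisibility chains this is the interlacing
`m_i ∣ n_i`, `n_(i+1) ∣ m_i`, with `r' ∈ {r - 1, r}`. The inequality is then arithmetic: writing
`n_1 = a * m_1` and `[G : H] = a * k'`, induction reduces it to `(a - 1) * (m_1 - k') ≥ 0`, and
the equal-rank case is the rank-drop case with `n_(r+1) = 1` appended.
-/

open Finset

section Torsion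

variable {A B : Type*} [AddCommGroup A] [AddCommGroup B]

lemma card_ker_nsmul_pi_zmod {ι : Type*} [Fintype ι] (a : ι → ℕ) (ha : ∀ i, a i ≠ 0) (k : ℕ) :
    Nat.card (nsmulAddMonoidHom k : (Π i, ZMod (a i)) →+ _).ker = ∏ i, (a i).gcd k := by
  have : ∀ i, NeZero (a i) := fun i => ⟨ha i⟩
  rw [Nat.card_congr ((Equiv.subtypeEquivRight fun x => ?_).trans
    (Equiv.subtypePiEquivPi (p := fun i y => y ∈ (nsmulAddMonoidHom k : ZMod (a i) →+ _).ker))),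
    Nat.card_pi]
  · simp only [IsAddCyclic.card_nsmulAddMonoidHom_ker, Nat.card_zmod]
  · simp [funext_iff]

lemma card_eq_prod_of_addEquiv_pi_zmod {ι : Type*} [Fintype ι] (a : ι → ℕ)
    (e : A ≃+ Π i, ZMod (a i)) : Nat.card A = ∏ i, a i := by
  rw [Nat.card_congr e.toEquiv, Nat.card_pi]
  exact prod_congr rfl fun i _ => Nat.card_zmod (a i)

lemma card_ker_nsmul_congr (e : A ≃+ B) (k : ℕ) :
    Nat.card (nsmulAddMonoidHom k : A →+ A).ker = Nat.card (nsmulAddMonoidHom k : B →+ B).ker :=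
  Nat.card_congr (e.toEquiv.subtypeEquiv fun x => by simp [← map_nsmul])

lemma gcd_prime_pow_succ (a : ℕ) {p : ℕ} (hp : p.Prime) (t : ℕ) :
    a.gcd (p ^ (t + 1)) = a.gcd (p ^ t) * if p ^ (t + 1) ∣ a then p else 1 := by
  split_ifs with h
  · rw [Nat.gcd_eq_right h, Nat.gcd_eq_right ((pow_dvd_pow p t.le_succ).trans h), pow_succ]
  · rw [mul_one]
    obtain ⟨j, hj, hgcd⟩ := (Nat.dvd_prime_pow hp).1 (Nat.gcd_dvd_right a (p ^ (t + 1)))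
    have hjt : j ≤ t := by
      by_contra! hjt
      apply h
      rw [← Nat.le_antisymm hj hjt, ← hgcd]
      exact Nat.gcd_dvd_left a _
    refine Nat.dvd_antisymm (Nat.dvd_gcd (Nat.gcd_dvd_left _ _) ?_)
      (Nat.gcd_dvd_gcd_of_dvd_right a (pow_dvd_pow p t.le_succ))
    exact hgcd ▸ pow_dvd_pow p hjt

lemma card_ker_nsmul_prime_pow_succ {ι : Type*} [Fintype ι] (a : ι → ℕ) (ha : ∀ i, a i ≠ 0)
    (e : A ≃+ Π i, ZMod (a i)) {p : ℕ} (hp : p.Prime) (t : ℕ) :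
    Nat.card (nsmulAddMonoidHom (p ^ (t + 1)) : A →+ A).ker =
      Nat.card (nsmulAddMonoidHom (p ^ t) : A →+ A).ker * p ^ #{i | p ^ (t + 1) ∣ a i} := by
  classical
  simp only [card_ker_nsmul_congr e, card_ker_nsmul_pi_zmod a ha, gcd_prime_pow_succ _ hp,
    prod_mul_distrib, prod_ite, prod_const_one, prod_const, mul_one]

lemma card_eq_card_inf_mul_card_map_mk (K H : AddSubgroup A) :
    Nat.card K = Nat.card ↥(K ⊓ H) * Nat.card (K.map (QuotientAddGroup.mk' H)) := by
  set f := (QuotientAddGroup.mk' H).comp K.subtype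
  rw [← f.ker.card_mul_index, AddSubgroup.index_ker, AddMonoidHom.range_comp,
    AddSubgroup.range_subtype, ← AddSubgroup.card_map_of_injective K.subtype_injective]
  congr 3
  ext x
  simp [f, and_comm]

lemma card_le_card_ker_mul_card_map [Finite A] (f : A →+ B) (K : AddSubgroup A) :
    Nat.card K ≤ Nat.card f.ker * Nat.card (K.map f) := by
  set g := f.comp K.subtype
  rw [← g.ker.card_mul_index, AddSubgroup.index_ker, AddMonoidHom.range_comp,
    AddSubgroup.range_subtype, ← AddSubgroup.card_map_of_injective K.subtype_injective]
  refine Nat.mul_le_mul_right _ (AddSubgroup.card_le_of_le ?_)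
  rintro _ ⟨x, hx, rfl⟩
  exact hx

end Torsion

section Quotient

variable {G : Type*} [AddCommGroup G] (H : AddSubgroup G)

lemma card_ker_nsmul_eq_mul_card_map_mk (k : ℕ) :
    Nat.card (nsmulAddMonoidHom k : G →+ G).ker =
      Nat.card (nsmulAddMonoidHom k : H →+ H).ker *
        Nat.card ((nsmulAddMonoidHom k : G →+ G).ker.map (QuotientAddGroup.mk' H)) := by
  rw [card_eq_card_inf_mul_card_map_mk _ H, ← AddSubgroup.card_map_of_injective H.subtype_injective]
  congr 3
  ext x
  simp

lemma card_map_mk_ker_nsmul_mul_le [Finite G] [IsAddCyclic (G ⧸ H)] {p : ℕ} (hp : 0 < p) (q : ℕ) :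
    Nat.card ((nsmulAddMonoidHom (p * q) : G →+ G).ker.map (QuotientAddGroup.mk' H)) ≤
      p * Nat.card ((nsmulAddMonoidHom q : G →+ G).ker.map (QuotientAddGroup.mk' H)) := by
  refine (card_le_card_ker_mul_card_map (nsmulAddMonoidHom p) _).trans
    (Nat.mul_le_mul ?_ (AddSubgroup.card_le_of_le ?_))
  · rw [IsAddCyclic.card_nsmulAddMonoidHom_ker]
    exact Nat.gcd_le_right _ hp
  · rintro _ ⟨_, ⟨x, hx : (p * q) • x = 0, rfl⟩, rfl⟩
    refine ⟨p • x, ?_, by simp⟩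
    rwa [SetLike.mem_coe, AddMonoidHom.mem_ker, nsmulAddMonoidHom_apply, ← mul_smul, mul_comm]

lemma card_filter_prime_pow_dvd_le_and_le_succ [Finite G] [IsAddCyclic (G ⧸ H)]
    {ι κ : Type*} [Fintype ι] [Fintype κ]
    (n : ι → ℕ) (m : κ → ℕ) (hn : ∀ i, n i ≠ 0) (hm : ∀ j, m j ≠ 0)
    (e : G ≃+ Π i, ZMod (n i)) (eH : H ≃+ Π j, ZMod (m j)) {p : ℕ} (hp : p.Prime) (t : ℕ) :
    #{j | p ^ (t + 1) ∣ m j} ≤ #{i | p ^ (t + 1) ∣ n i} ∧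
      #{i | p ^ (t + 1) ∣ n i} ≤ #{j | p ^ (t + 1) ∣ m j} + 1 := by
  set I : ℕ → AddSubgroup (G ⧸ H) := fun k =>
    (nsmulAddMonoidHom k : G →+ G).ker.map (QuotientAddGroup.mk' H)
  have hmono : Nat.card (I (p ^ t)) ≤ Nat.card (I (p ^ (t + 1))) := by
    refine AddSubgroup.card_le_of_le (AddSubgroup.map_mono fun x (hx : p ^ t • x = 0) => ?_)
    rw [AddMonoidHom.mem_ker, nsmulAddMonoidHom_apply, pow_succ', mul_smul, hx, smul_zero]
  have hgrow : Nat.card (I (p ^ (t + 1))) ≤ p * Nat.card (I (p ^ t)) :=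
    pow_succ' p t ▸ card_map_mk_ker_nsmul_mul_le H hp.pos _
  have hG := card_ker_nsmul_prime_pow_succ n hn e hp t
  rw [card_ker_nsmul_eq_mul_card_map_mk H, card_ker_nsmul_eq_mul_card_map_mk H,
    card_ker_nsmul_prime_pow_succ m hm eH hp t] at hG
  have hI : 0 < Nat.card (I (p ^ t)) := Nat.card_pos
  have hratio : p ^ #{j | p ^ (t + 1) ∣ m j} * Nat.card (I (p ^ (t + 1))) =
      p ^ #{i | p ^ (t + 1) ∣ n i} * Nat.card (I (p ^ t)) := by
    have hH : 0 < Nat.card (nsmulAddMonoidHom (p ^ t) : H →+ H).ker := Nat.card_pos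
    refine Nat.eq_of_mul_eq_mul_left hH ?_
    linarith
  constructor
  · rw [← Nat.pow_le_pow_iff_right hp.one_lt]
    refine Nat.le_of_mul_le_mul_right ?_ hI
    calc _ ≤ p ^ #{j | p ^ (t + 1) ∣ m j} * Nat.card (I (p ^ (t + 1))) := by gcongr
      _ = _ := hratio
  · rw [← Nat.pow_le_pow_iff_right hp.one_lt]
    refine Nat.le_of_mul_le_mul_right ?_ hI
    calc _ = p ^ #{j | p ^ (t + 1) ∣ m j} * Nat.card (I (p ^ (t + 1))) := hratio.symm
      _ ≤ p ^ #{j | p ^ (t + 1) ∣ m j} * (p * Nat.card (I (p ^ t))) := by gcongr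
      _ = _ := by ring

end Quotient

section DvdChain

variable {u v : ℕ} {a : Fin u → ℕ} {b : Fin v → ℕ}

lemma lt_card_filter_dvd_iff (ha : ∀ i j, i ≤ j → a j ∣ a i) (d : ℕ) (i : Fin u) :
    (i : ℕ) < #{j | d ∣ a j} ↔ d ∣ a i := by
  constructor
  · intro hi
    by_contra hd
    have : #{j | d ∣ a j} ≤ #(Iio i) := card_le_card fun j hj => by
      rw [mem_filter] at hj
      by_contra hij
      exact hd (hj.2.trans (ha i j (not_lt.1 (mem_Iio.not.1 hij))))
    rw [Fin.card_Iio] at this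
    omega
  · intro hd
    calc (i : ℕ) < #(Iic i) := by rw [Fin.card_Iic]; omega
      _ ≤ _ := card_le_card fun j hj => mem_filter.2 ⟨mem_univ j, hd.trans (ha j i (mem_Iic.1 hj))⟩

lemma dvd_of_card_filter_prime_pow_dvd_le (ha : ∀ i j, i ≤ j → a j ∣ a i)
    (hb : ∀ i j, i ≤ j → b j ∣ b i) {s : ℕ}
    (h : ∀ p k, p.Prime → #{j | p ^ (k + 1) ∣ a j} ≤ #{j | p ^ (k + 1) ∣ b j} + s)
    {i : Fin u} {j : Fin v} (hij : (j : ℕ) + s = i) : a i ∣ b j := by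
  rw [Nat.dvd_iff_prime_pow_dvd_dvd]
  rintro p (_ | k) hp hdvd
  · exact (pow_zero p).symm ▸ one_dvd _
  · have hi := (lt_card_filter_dvd_iff ha _ i).2 hdvd
    have hcard := h p k hp
    exact (lt_card_filter_dvd_iff hb _ j).1 (by omega)

lemma le_of_card_filter_prime_pow_dvd_le (ha : ∀ i j, i ≤ j → a j ∣ a i) (ha1 : ∀ i, a i ≠ 1)
    {s : ℕ} (h : ∀ p k, p.Prime → #{j | p ^ (k + 1) ∣ a j} ≤ #{j | p ^ (k + 1) ∣ b j} + s) :
    u ≤ v + s := by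
  rcases u with _ | u
  · omega
  set p := (a (Fin.last u)).minFac
  have hlast := (lt_card_filter_dvd_iff ha (p ^ (0 + 1)) (Fin.last u)).2
    (by simpa using Nat.minFac_dvd _)
  have hcard := h p 0 (Nat.minFac_prime (ha1 _))
  have hv := card_filter_le univ fun j => p ^ (0 + 1) ∣ b j
  rw [card_univ, Fintype.card_fin, Fin.val_last] at *
  omega

lemma interlace_of_card_filter_prime_pow_dvd (ha : ∀ i j, i ≤ j → a j ∣ a i)
    (hb : ∀ i j, i ≤ j → b j ∣ b i) (ha1 : ∀ i, a i ≠ 1) (hb1 : ∀ j, b j ≠ 1)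
    (h : ∀ p k, p.Prime → #{i | p ^ (k + 1) ∣ b i} ≤ #{i | p ^ (k + 1) ∣ a i} ∧
      #{i | p ^ (k + 1) ∣ a i} ≤ #{i | p ^ (k + 1) ∣ b i} + 1) :
    v ≤ u ∧ u ≤ v + 1 ∧ (∀ (i : Fin v) (j : Fin u), (j : ℕ) = i → b i ∣ a j) ∧
      (∀ (i : Fin v) (j : Fin u), (i : ℕ) + 1 = j → a j ∣ b i) :=
  ⟨le_of_card_filter_prime_pow_dvd_le (s := 0) hb hb1 fun p k hp => (h p k hp).1,
    le_of_card_filter_prime_pow_dvd_le ha ha1 fun p k hp => (h p k hp).2,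
    fun _ _ hij => dvd_of_card_filter_prime_pow_dvd_le (s := 0) hb ha (fun p k hp => (h p k hp).1)
      hij,
    fun _ _ hij => dvd_of_card_filter_prime_pow_dvd_le ha hb (fun p k hp => (h p k hp).2) hij⟩

end DvdChain

lemma eq_of_dvd_of_prod_eq {ι : Type*} [Fintype ι] {f g : ι → ℕ} (hfg : ∀ i, f i ∣ g i)
    (hg : ∀ i, 0 < g i) (h : ∏ i, f i = ∏ i, g i) (i : ι) : f i = g i := by
  have hle (i : ι) : f i ≤ g i := Nat.le_of_dvd (hg i) (hfg i)
  by_contra hi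
  exact (prod_lt_prod (fun i _ => Nat.pos_of_dvd_of_pos (hfg i) (hg i)) (fun i _ => hle i)
    ⟨i, mem_univ i, (hle i).lt_of_ne hi⟩).ne h

lemma add_mul_le_mul_add_s7 {a b c : ℕ} (ha : 1 ≤ a) (hcb : c ≤ b) : b + a * c ≤ b * a + c := by
  nlinarith

lemma eq_one_or_eq_of_add_mul_eq_mul_add {a b c : ℕ} (ha : 1 ≤ a) (hcb : c ≤ b)
    (h : b + a * c = b * a + c) : a = 1 ∨ c = b := by
  by_contra! hne
  have : 2 ≤ a := by omega
  have : c < b := by omega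
  nlinarith

section Interlace

variable {r k : ℕ} {n : Fin (r + 1) → ℕ} {m : Fin r → ℕ}

lemma le_head_of_mul_prod_eq (hm : ∀ i, 0 < m i) (hnm : ∀ i, n i.succ ∣ m i)
    (hk : k * ∏ i, m i = ∏ i, n i) : k ≤ n 0 := by
  refine Nat.le_of_mul_le_mul_right ?_ (prod_pos fun i (_ : i ∈ univ) => hm i)
  calc k * ∏ i, m i = n 0 * ∏ i : Fin r, n i.succ := by rw [hk, Fin.prod_univ_succ]
    _ ≤ n 0 * ∏ i, m i := by
      gcongr with i
      exact Nat.le_of_dvd (hm i) (hnm i)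

lemma eq_succ_of_mul_prod_eq_of_eq_head (hm : ∀ i, 0 < m i) (hnm : ∀ i, n i.succ ∣ m i)
    (hk : k * ∏ i, m i = ∏ i, n i) (hk0 : k = n 0) (hn0 : 0 < n 0) (i : Fin r) :
    m i = n i.succ := by
  rw [Fin.prod_univ_succ, hk0] at hk
  exact (eq_of_dvd_of_prod_eq hnm hm (Nat.eq_of_mul_eq_mul_left hn0 hk).symm i).symm

lemma exists_mul_prod_tail_eq {n : Fin (r + 1 + 1) → ℕ} {m : Fin (r + 1) → ℕ}
    (hm : ∀ i, 0 < m i) (hmn : ∀ i, m i ∣ n i.castSucc) (hk : k * ∏ i, m i = ∏ i, n i) :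
    ∃ a k', n 0 = m 0 * a ∧ k = a * k' ∧
      k' * ∏ i : Fin r, m i.succ = ∏ i : Fin (r + 1), n i.succ := by
  obtain ⟨a, ha⟩ : m 0 ∣ n 0 := hmn 0
  obtain ⟨k', hk'⟩ : ∏ i : Fin r, m i.succ ∣ ∏ i : Fin (r + 1), n i.succ :=
    (prod_dvd_prod_of_dvd _ _ fun i _ => Fin.succ_castSucc i ▸ hmn i.succ).trans
      (Fin.prod_univ_castSucc (fun i => n i.succ) ▸ dvd_mul_right _ _)
  refine ⟨a, k', ha, ?_, by rw [hk', mul_comm]⟩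
  have hprod : 0 < ∏ i : Fin r, m i.succ := prod_pos fun i _ => hm i.succ
  refine Nat.eq_of_mul_eq_mul_right (Nat.mul_pos (hm 0) hprod) ?_
  calc k * (m 0 * ∏ i : Fin r, m i.succ) = ∏ i, n i := by rw [← hk, Fin.prod_univ_succ]
    _ = a * k' * (m 0 * ∏ i : Fin r, m i.succ) := by rw [Fin.prod_univ_succ, ha, hk']; ring

theorem sum_sub_one_add_le_of_mul_prod_eq (hn : ∀ i, 0 < n i) (hmn : ∀ i, m i ∣ n i.castSucc)
    (hnm : ∀ i, n i.succ ∣ m i) (hk : k * ∏ i, m i = ∏ i, n i) :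
    (∑ i, (m i - 1)) + k ≤ (∑ i, (n i - 1)) + 1 ∧
      ((∑ i, (m i - 1)) + k = (∑ i, (n i - 1)) + 1 →
        ∃ j : Fin (r + 1), ∀ i, m i = n (j.succAbove i)) := by
  induction r generalizing k with
  | zero =>
    simp only [univ_eq_empty, prod_empty, mul_one, Fin.prod_univ_succ] at hk
    simp only [Fin.sum_univ_succ, univ_eq_empty, sum_empty, hk]
    exact ⟨by have := hn 0; omega, fun _ => ⟨0, fun i => i.elim0⟩⟩
  | succ r ih =>
    have hm (i : Fin (r + 1)) : 0 < m i := Nat.pos_of_dvd_of_pos (hmn i) (hn _)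
    obtain ⟨a, k', ha, hk_eq, hk'⟩ := exists_mul_prod_tail_eq hm hmn hk
    obtain ⟨ih_le, ih_eq⟩ := ih (k := k') (n := fun i => n i.succ) (m := fun i => m i.succ)
      (fun i => hn _) (fun i => Fin.succ_castSucc i ▸ hmn i.succ) (fun i => hnm _) hk'
    have hk'_le : k' ≤ n 1 := le_head_of_mul_prod_eq (fun i => hm i.succ) (fun i => hnm i.succ) hk'
    have hn1 : n 1 ≤ m 0 := Nat.le_of_dvd (hm 0) (hnm 0)
    have ha1 : 1 ≤ a := Nat.pos_of_ne_zero fun h => by simp [h] at ha; exact (hn 0).ne' ha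
    have hkey : m 0 + a * k' ≤ n 0 + k' := ha ▸ add_mul_le_mul_add_s7 ha1 (hk'_le.trans hn1)
    have hm0 := hm 0
    have hn0 := hn 0
    rw [Fin.sum_univ_succ, Fin.sum_univ_succ (f := fun i => n i - 1), hk_eq]
    refine ⟨by omega, fun heq => ?_⟩
    have htail : ∑ i : Fin r, (m i.succ - 1) + k' = ∑ i : Fin (r + 1), (n i.succ - 1) + 1 := by
      omega
    obtain rfl | hkm := eq_one_or_eq_of_add_mul_eq_mul_add ha1 (hk'_le.trans hn1)
      (by rw [← ha]; omega)
    · obtain ⟨j, hj⟩ := ih_eq htail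
      refine ⟨j.succ, Fin.cases ?_ fun i => ?_⟩
      · rw [Fin.succ_succAbove_zero, ha, mul_one]
      · rw [Fin.succ_succAbove_succ]
        exact hj i
    · have hk'n : k' = n 1 := by omega
      refine ⟨0, Fin.cases ?_ fun i => ?_⟩
      · rw [Fin.succAbove_zero, Fin.succ_zero_eq_one]
        omega
      · rw [Fin.succAbove_zero]
        exact eq_succ_of_mul_prod_eq_of_eq_head (fun i => hm i.succ) (fun i => hnm i.succ)
          hk' hk'n (hn _) i

lemma sum_sub_one_add_le_of_mul_prod_eq_of_one_lt {n m : Fin r → ℕ} (hn : ∀ i, 0 < n i)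
    (hm : ∀ i, 1 < m i) (hmn : ∀ i, m i ∣ n i) (hnm : ∀ i j : Fin r, (i : ℕ) + 1 = j → n j ∣ m i)
    (hk : k * ∏ i, m i = ∏ i, n i) (hk1 : 1 < k) :
    (∑ i, (m i - 1)) + k ≤ ∑ i, (n i - 1) := by
  set n' : Fin (r + 1) → ℕ := Fin.snoc n 1
  have hn' (i : Fin (r + 1)) : 0 < n' i :=
    Fin.lastCases (by simp [n']) (fun i => by simpa [n'] using hn i) i
  have hmn' (i : Fin r) : m i ∣ n' i.castSucc := by simpa [n'] using hmn i
  have hnm' (i : Fin r) : n' i.succ ∣ m i := by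
    by_cases hi : (i : ℕ) + 1 < r
    · rw [show i.succ = (⟨i + 1, hi⟩ : Fin r).castSucc from Fin.ext rfl]
      simp only [n', Fin.snoc_castSucc]
      exact hnm i _ rfl
    · rw [show i.succ = Fin.last r from Fin.ext (by simp; omega)]
      simp [n']
  have hsum : ∑ i, (n' i - 1) = ∑ i, (n i - 1) := by simp [n', Fin.sum_univ_castSucc]
  have hprod : ∏ i, n' i = ∏ i, n i := by simp [n', Fin.prod_univ_castSucc]
  obtain ⟨hle, heq⟩ := sum_sub_one_add_le_of_mul_prod_eq hn' hmn' hnm' (hk.trans hprod.symm)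
  by_contra! hlt
  obtain ⟨j, hj⟩ := heq (by omega)
  by_cases hj_last : j = Fin.last r
  · subst hj_last
    have hmn_eq : ∏ i, m i = ∏ i, n i := prod_congr rfl fun i _ => by simpa [n'] using hj i
    rw [hmn_eq] at hk
    have := Nat.eq_of_mul_eq_mul_right (prod_pos fun i _ => hn i) (hk.trans (one_mul _).symm)
    omega
  · obtain ⟨i, hi⟩ := Fin.exists_succAbove_eq (Ne.symm hj_last)
    have := hm i
    rw [hj i, hi] at this
    simp [n'] at this

end Interlace

/-- Let `G` be a finite abelian group of rank `r` with invariant factors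
`n_1 ≥ … ≥ n_r` (all `> 1`), and let `H` be a proper subgroup of `G` with cyclic factor
group `G ⧸ H`, with invariant factors `m_1 ≥ … ≥ m_{r'}`.  Then
`d*(G) ≥ d*(H) + [G : H] - 1`; moreover equality holds only if `r' = r - 1` and
`H ≅ ⊕_{i ≠ j} C_{n_i}` for some `j`. -/
theorem dstar_subgroup_cyclic_quotient
    {G : Type*} [AddCommGroup G] [Fintype G]
    (r : ℕ) (n : Fin r → ℕ)
    (hgt : ∀ i, 1 < n i)
    (hchain : ∀ i j : Fin r, i ≤ j → n j ∣ n i)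
    (hiso : Nonempty (G ≃+ ((i : Fin r) → ZMod (n i))))
    (H : AddSubgroup G) (hH : H ≠ ⊤) (hcyc : IsAddCyclic (G ⧸ H))
    (r' : ℕ) (m : Fin r' → ℕ)
    (hgt' : ∀ i, 1 < m i)
    (hchain' : ∀ i j : Fin r', i ≤ j → m j ∣ m i)
    (hisoH : Nonempty (H ≃+ ((i : Fin r') → ZMod (m i)))) :
    ((∑ i, (m i - 1)) + H.index - 1 ≤ ∑ i, (n i - 1)) ∧
    ((∑ i, (n i - 1)) = (∑ i, (m i - 1)) + H.index - 1 →
      r' = r - 1 ∧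
        ∃ j : Fin r, Nonempty (H ≃+ ((i : {i : Fin r // i ≠ j}) → ZMod (n i.1)))) := by
  obtain ⟨e⟩ := hiso
  obtain ⟨eH⟩ := hisoH
  have hn (i : Fin r) : 0 < n i := zero_lt_one.trans (hgt i)
  have hcount (p t : ℕ) (hp : p.Prime) := card_filter_prime_pow_dvd_le_and_le_succ H n m
    (fun i => (hn i).ne') (fun j => (zero_lt_one.trans (hgt' j)).ne') e eH hp t
  obtain ⟨hr', hr, hmn, hnm⟩ := interlace_of_card_filter_prime_pow_dvd hchain hchain'
    (fun i => (hgt i).ne') (fun j => (hgt' j).ne') hcount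
  have hk : H.index * ∏ i, m i = ∏ i, n i := by
    rw [← card_eq_prod_of_addEquiv_pi_zmod m eH, ← card_eq_prod_of_addEquiv_pi_zmod n e]
    exact H.index_mul_card
  have hk1 : 1 < H.index := AddSubgroup.one_lt_index_of_ne_top hH
  obtain rfl | rfl : r = r' ∨ r = r' + 1 := by omega
  · have := sum_sub_one_add_le_of_mul_prod_eq_of_one_lt hn hgt' (fun i => hmn i i rfl) hnm hk hk1
    exact ⟨by omega, fun h => by omega⟩
  · obtain ⟨hle, heq⟩ := sum_sub_one_add_le_of_mul_prod_eq hn (fun i => hmn i _ rfl)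
      (fun i => hnm i _ rfl) hk
    refine ⟨by omega, fun h => ⟨by omega, ?_⟩⟩
    obtain ⟨j, hj⟩ := heq (by omega)
    obtain rfl : m = fun i => n (j.succAbove i) := funext hj
    exact ⟨j, ⟨eH.trans (RingEquiv.piCongrLeft (fun i : {i // i ≠ j} => ZMod (n i))
      (finSuccAboveEquiv j)).toAddEquiv⟩⟩
end
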